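/- Let K ∈ ℝ, N ∈ (1,∞), D > 0 (with D ≤ π√((N−1)/K) if K > 0). Then the function A_{K,N,D}(a) := ∫₀ᵃ ( s_{K/(N−1)}(D−x) / s_{K/(N−1)}(D−a) )^{N−1} dx is strictly increasing on [0,D). -/
import Mathlib


open MeasureTheory Filter

noncomputable section

/-- The comparison function `s_κ(θ)`:
`sin(√κ·θ)/√κ` if `κ > 0`, `θ` if `κ = 0`, `sinh(√(−κ)·θ)/√(−κ)` if `κ < 0`. -/
def sK (κ θ : ℝ) : ℝ :=
  if 0 < κ then Real.sin (Real.sqrt κ * θ) / Real.sqrt κ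
  else if κ = 0 then θ
  else Real.sinh (Real.sqrt (-κ) * θ) / Real.sqrt (-κ)

/-- `h` is an `MCP(K,N)`-density on the interval `I ⊆ ℝ`: it is a nonnegative Borel
function satisfying
`h(t·x₁+(1−t)·x₀) ≥ (s_{K/(N−1)}((1−t)|x₁−x₀|)/s_{K/(N−1)}(|x₁−x₀|))^{N−1}·h(x₀)`
for all `x₀, x₁ ∈ I`, `t ∈ [0,1]`; when `x₀ = x₁` the coefficient is interpreted as `1−t`,
and when `K > 0` and `|x₁−x₀| ≥ π√((N−1)/K)` the coefficient is `+∞`, forcing `h x₀ = 0`. -/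
def IsMCPDensity (K N : ℝ) (I : Set ℝ) (h : ℝ → ℝ) : Prop :=
  Measurable h ∧ (∀ x ∈ I, 0 ≤ h x) ∧
  ∀ x₀ ∈ I, ∀ x₁ ∈ I, ∀ t ∈ Set.Icc (0:ℝ) 1,
    (x₀ = x₁ → (1 - t) * h x₀ ≤ h x₀) ∧
    (x₀ ≠ x₁ →
      ((0 < K ∧ Real.pi * Real.sqrt ((N - 1) / K) ≤ |x₁ - x₀|) → h x₀ = 0) ∧
      (¬(0 < K ∧ Real.pi * Real.sqrt ((N - 1) / K) ≤ |x₁ - x₀|) →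
        (sK (K / (N - 1)) ((1 - t) * |x₁ - x₀|) / sK (K / (N - 1)) |x₁ - x₀|) ^ (N - 1) * h x₀
          ≤ h (t * x₁ + (1 - t) * x₀)))

/-- `h` is a `CD(K,N)`-density on the interval `I ⊆ ℝ`. -/
def IsCDDensity (K N : ℝ) (I : Set ℝ) (h : ℝ → ℝ) : Prop :=
  (∀ x ∈ I, 0 ≤ h x) ∧
  ∀ x₀ ∈ I, ∀ x₁ ∈ I, x₀ < x₁ → ∀ t ∈ Set.Icc (0:ℝ) 1,
    (sK (K / (N - 1)) ((1 - t) * (x₁ - x₀)) / sK (K / (N - 1)) (x₁ - x₀)) * h x₀ ^ (1 / (N - 1))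
      + (sK (K / (N - 1)) (t * (x₁ - x₀)) / sK (K / (N - 1)) (x₁ - x₀)) * h x₁ ^ (1 / (N - 1))
      ≤ h ((1 - t) * x₀ + t * x₁) ^ (1 / (N - 1))

/-- The lower-bound function `f_{K,N,D}`. -/
def fKND (K N D : ℝ) (x : ℝ) : ℝ :=
  if x = 0 ∨ x = D then 0
  else ((∫ y in (0:ℝ)..x, (sK (K / (N - 1)) (D - y) / sK (K / (N - 1)) (D - x)) ^ (N - 1)) +
        (∫ y in x..D, (sK (K / (N - 1)) y / sK (K / (N - 1)) x) ^ (N - 1)))⁻¹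

/-- The model density `h^a_{K,N,D}`. -/
def hKND (K N D a : ℝ) (x : ℝ) : ℝ :=
  if x ≤ a then fKND K N D a * (sK (K / (N - 1)) (D - x) / sK (K / (N - 1)) (D - a)) ^ (N - 1)
  else fKND K N D a * (sK (K / (N - 1)) x / sK (K / (N - 1)) a) ^ (N - 1)

/-- `v_{K,N,D}(a) = ∫₀ᵃ h^a_{K,N,D}(x) dx`. -/
def vKND (K N D a : ℝ) : ℝ := ∫ x in (0:ℝ)..a, hKND K N D a x

/-- The (outer) Minkowski content of `A` with respect to `μ`:
`liminf_{ε→0⁺} (μ(Aᵉ) − μ(A))/ε` where `Aᵉ` is the open `ε`-neighbourhood of `A`. -/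
def mink (μ : Measure ℝ) (A : Set ℝ) : ℝ :=
  Filter.liminf (fun ε : ℝ => ((μ (Metric.thickening ε A)).toReal - (μ A).toReal) / ε)
    (nhdsWithin 0 (Set.Ioi 0))

/-- The measure `μ_h = h · Leb` restricted to `[0,D]`. -/
def muh (h : ℝ → ℝ) (D : ℝ) : Measure ℝ :=
  (volume.restrict (Set.Icc (0:ℝ) D)).withDensity (fun x => ENNReal.ofReal (h x))

/-- The restricted one-dimensional isoperimetric profile `Ĩ_{K,N,D}(v)` over
`MCP(K,N)`-densities on `[0,D]` integrating to `1`. -/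
def Itilde (K N D v : ℝ) : ℝ :=
  sInf { p : ℝ | ∃ h : ℝ → ℝ, IsMCPDensity K N (Set.Icc 0 D) h ∧
    (∫ x in (0:ℝ)..D, h x) = 1 ∧
    ∃ A : Set ℝ, MeasurableSet A ∧ A ⊆ Set.Icc 0 D ∧ (muh h D A).toReal = v ∧
      p = mink (muh h D) A }

/-- The restricted one-dimensional isoperimetric profile `Ĩ^{CD}_{K,N,D}(v)` over
`CD(K,N)`-densities on `[0,D]` integrating to `1`. -/
def ItildeCD (K N D v : ℝ) : ℝ :=
  sInf { p : ℝ | ∃ h : ℝ → ℝ, IsCDDensity K N (Set.Icc 0 D) h ∧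
    (∫ x in (0:ℝ)..D, h x) = 1 ∧
    ∃ A : Set ℝ, MeasurableSet A ∧ A ⊆ Set.Icc 0 D ∧ (muh h D A).toReal = v ∧
      p = mink (muh h D) A }


lemma sK_nonneg {κ θ : ℝ} (h0 : 0 ≤ θ) (hπ : Real.sqrt κ * θ ≤ Real.pi) : 0 ≤ sK κ θ := by
  unfold sK
  split_ifs with h1 h2
  · exact div_nonneg (Real.sin_nonneg_of_nonneg_of_le_pi
      (mul_nonneg (Real.sqrt_nonneg _) h0) hπ) (Real.sqrt_nonneg κ)
  · exact h0
  · exact div_nonneg (by positivity) (Real.sqrt_nonneg _)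

lemma sK_pos {κ θ : ℝ} (h0 : 0 < θ) (hπ : Real.sqrt κ * θ < Real.pi) : 0 < sK κ θ := by
  unfold sK
  split_ifs with h1 h2
  · exact div_pos (Real.sin_pos_of_pos_of_lt_pi
      (mul_pos (Real.sqrt_pos.mpr h1) h0) hπ) (Real.sqrt_pos.mpr h1)
  · exact h0
  · have hκ : 0 < -κ := by
      rcases lt_trichotomy κ 0 with h | h | h
      · linarith
      · exact absurd h h2
      · exact absurd h h1
    have hr : 0 < Real.sqrt (-κ) := Real.sqrt_pos.mpr hκ
    exact div_pos (by positivity) hr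

lemma sK_continuous (κ : ℝ) : Continuous (sK κ) := by
  unfold sK
  rcases lt_trichotomy 0 κ with h | h | h
  · simp only [if_pos h]; fun_prop
  · subst h; simp only [lt_irrefl, if_neg, if_pos, if_false, if_true]; exact continuous_id
  · simp only [if_neg (by linarith : ¬ 0 < κ), if_neg (by linarith : ¬ κ = 0)]; fun_prop

lemma sK_ratio {κ θ₁ θ₂ c : ℝ} (h1 : 0 ≤ θ₁) (h12 : θ₁ ≤ θ₂) (hc : 0 ≤ c)
    (hπ : Real.sqrt κ * (θ₂ + c) ≤ Real.pi) :
    sK κ (θ₂ + c) * sK κ θ₁ ≤ sK κ (θ₁ + c) * sK κ θ₂ := by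
  unfold sK
  split_ifs with hκ h0
  · set r := Real.sqrt κ with hr'
    have hr : 0 < r := Real.sqrt_pos.mpr hκ
    rw [div_mul_div_comm, div_mul_div_comm, div_le_div_iff₀ (by positivity) (by positivity)]
    have hπ' : r * θ₂ + r * c ≤ Real.pi := by nlinarith
    have hα : 0 ≤ r * θ₁ := by positivity
    have hβ : r * θ₁ ≤ r * θ₂ := by nlinarith
    have hγ0 : 0 ≤ r * c := by positivity
    have hγ : 0 ≤ Real.sin (r * c) :=
      Real.sin_nonneg_of_nonneg_of_le_pi hγ0 (by linarith)
    have hd : 0 ≤ Real.sin (r * θ₂ - r * θ₁) :=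
      Real.sin_nonneg_of_nonneg_of_le_pi (by linarith) (by linarith)
    rw [Real.sin_sub] at hd
    have e1 : r * (θ₂ + c) = r * θ₂ + r * c := by ring
    have e2 : r * (θ₁ + c) = r * θ₁ + r * c := by ring
    rw [e1, e2, Real.sin_add, Real.sin_add]
    nlinarith [mul_nonneg hγ hd]
  · nlinarith
  · have hκ' : 0 < -κ := by
      rcases lt_trichotomy κ 0 with h | h | h
      · linarith
      · exact absurd h h0
      · exact absurd h hκ
    set r := Real.sqrt (-κ) with hr'
    have hr : 0 < r := Real.sqrt_pos.mpr hκ'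
    rw [div_mul_div_comm, div_mul_div_comm, div_le_div_iff₀ (by positivity) (by positivity)]
    have hβ : r * θ₁ ≤ r * θ₂ := by nlinarith
    have hγ : 0 ≤ Real.sinh (r * c) := by positivity
    have hd : 0 ≤ Real.sinh (r * θ₂ - r * θ₁) := by
      have : (0:ℝ) ≤ r * θ₂ - r * θ₁ := by linarith
      positivity
    rw [Real.sinh_sub] at hd
    have e1 : r * (θ₂ + c) = r * θ₂ + r * c := by ring
    have e2 : r * (θ₁ + c) = r * θ₁ + r * c := by ring
    rw [e1, e2, Real.sinh_add, Real.sinh_add]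
    nlinarith [mul_nonneg hγ hd]

/-- Lemma: the function `A_{K,N,D}(a) = ∫₀ᵃ (s_{K/(N−1)}(D−x)/s_{K/(N−1)}(D−a))^{N−1} dx`
is strictly increasing on `[0,D)`. -/
theorem AKND_strictMonoOn (K N D : ℝ) (hN : 1 < N) (hD : 0 < D)
    (hDK : 0 < K → D ≤ Real.pi * Real.sqrt ((N - 1) / K)) :
    StrictMonoOn
      (fun a => ∫ x in (0:ℝ)..a,
        (sK (K / (N - 1)) (D - x) / sK (K / (N - 1)) (D - a)) ^ (N - 1))
      (Set.Ico 0 D) := by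
  intro a ha b hb hab
  set κ := K / (N - 1) with hκdef
  have hm : 0 < N - 1 := by linarith
  -- global bound √κ * D ≤ π
  have hπD : Real.sqrt κ * D ≤ Real.pi := by
    rcases le_or_gt κ 0 with h | h
    · rw [Real.sqrt_eq_zero_of_nonpos h, zero_mul]
      exact Real.pi_pos.le
    · have hK : 0 < K := by
        by_contra hK
        push_neg at hK
        have : κ ≤ 0 := div_nonpos_of_nonpos_of_nonneg hK hm.le
        linarith
      have h1 : Real.sqrt ((N - 1) / K) = (Real.sqrt κ)⁻¹ := by
        rw [hκdef, ← Real.sqrt_inv]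
        congr 1
        field_simp
      have h2 := hDK hK
      rw [h1] at h2
      have hr : 0 < Real.sqrt κ := Real.sqrt_pos.mpr h
      calc Real.sqrt κ * D ≤ Real.sqrt κ * (Real.pi * (Real.sqrt κ)⁻¹) := by
            exact mul_le_mul_of_nonneg_left h2 hr.le
        _ = Real.pi := by field_simp
  have hle : ∀ θ : ℝ, 0 ≤ θ → θ ≤ D → Real.sqrt κ * θ ≤ Real.pi := by
    intro θ h0 h1
    calc Real.sqrt κ * θ ≤ Real.sqrt κ * D :=
          mul_le_mul_of_nonneg_left h1 (Real.sqrt_nonneg _)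
      _ ≤ Real.pi := hπD
  have hltπ : ∀ θ : ℝ, 0 ≤ θ → θ < D → Real.sqrt κ * θ < Real.pi := by
    intro θ h0 h1
    rcases eq_or_lt_of_le (Real.sqrt_nonneg κ) with h | h
    · rw [← h]; simpa using Real.pi_pos
    · calc Real.sqrt κ * θ < Real.sqrt κ * D := by exact mul_lt_mul_of_pos_left h1 h
        _ ≤ Real.pi := hπD
  -- the integrand family
  set g : ℝ → ℝ → ℝ := fun t x => (sK κ (D - x) / sK κ (D - t)) ^ (N - 1) with hg
  have hgc : ∀ t : ℝ, Continuous (g t) := by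
    intro t
    apply Continuous.rpow_const
    · exact ((sK_continuous κ).comp (continuous_const.sub continuous_id)).div_const _
    · intro x; exact Or.inr hm.le
  have hgi : ∀ t u v : ℝ, IntervalIntegrable (g t) MeasureTheory.volume u v :=
    fun t u v => (hgc t).intervalIntegrable u v
  have hb0 : 0 < b := lt_of_le_of_lt ha.1 hab
  have hDb : 0 < D - b := by linarith [hb.2]
  have hsDb : 0 < sK κ (D - b) := sK_pos hDb (hltπ _ hDb.le (by linarith))
  -- positivity of the first piece
  have key4 : 0 < ∫ x in (0:ℝ)..(b - a), g b x := by
    apply intervalIntegral.intervalIntegral_pos_of_pos_on (hgi b 0 (b - a))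
    · intro x hx
      have hx1 : 0 < x := hx.1
      have hx2 : x < b - a := hx.2
      have h1 : 0 < D - x := by linarith [ha.1]
      have h2 : D - x < D := by linarith
      have hs : 0 < sK κ (D - x) := sK_pos h1 (hltπ _ h1.le h2)
      exact Real.rpow_pos_of_pos (div_pos hs hsDb) _
    · linarith
  -- pointwise comparison on [0, a]
  have key3 : ∀ y ∈ Set.Icc (0:ℝ) a, g a y ≤ g b (y + (b - a)) := by
    intro y hy
    have hy0 : 0 ≤ y := hy.1
    have hya : y ≤ a := hy.2
    have harg : D - (y + (b - a)) = (D - b) + (a - y) := by ring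
    have harg2 : D - y = (D - a) + (a - y) := by ring
    have hnn : 0 ≤ sK κ (D - y) :=
      sK_nonneg (by linarith [ha.2]) (hle _ (by linarith [ha.2]) (by linarith))
    have hDa0 : 0 ≤ D - a := by linarith [ha.2]
    have hsDa : 0 ≤ sK κ (D - a) := sK_nonneg hDa0 (hle _ hDa0 (by linarith))
    rcases eq_or_lt_of_le hsDa with hz | hz
    · -- denominator zero: LHS base is x / 0 = 0
      rw [hg]
      simp only [← hz, div_zero]
      rw [Real.zero_rpow (by linarith)]
      apply Real.rpow_nonneg
      apply div_nonneg _ hsDb.le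
      rw [harg]
      exact sK_nonneg (by linarith) (hle _ (by linarith) (by linarith))
    · -- main case: use the ratio lemma
      have hrat := sK_ratio (θ₁ := D - b) (θ₂ := D - a) (c := a - y)
        hDb.le (by linarith) (by linarith)
        (by rw [show D - a + (a - y) = D - y by ring]; exact hle _ (by linarith) (by linarith))
      rw [show D - a + (a - y) = D - y by ring, show D - b + (a - y) = D - (y + (b - a)) by ring]
        at hrat
      have hbase : sK κ (D - y) / sK κ (D - a) ≤ sK κ (D - (y + (b - a))) / sK κ (D - b) := by
        rw [div_le_div_iff₀ hz hsDb]
        linarith [hrat]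
      exact Real.rpow_le_rpow (div_nonneg hnn hsDa) hbase hm.le
  have key3' : (∫ y in (0:ℝ)..a, g a y) ≤ ∫ y in (0:ℝ)..a, g b (y + (b - a)) := by
    apply intervalIntegral.integral_mono_on ha.1 (hgi a 0 a)
    · exact (((hgc b).comp (continuous_id.add continuous_const))).intervalIntegrable 0 a
    · exact key3
  have key2 : (∫ y in (0:ℝ)..a, g b (y + (b - a))) = ∫ x in (b - a)..b, g b x := by
    rw [intervalIntegral.integral_comp_add_right (a := 0) (b := a) (f := g b) (d := b - a)]
    norm_num
  have key1 : (∫ x in (0:ℝ)..(b - a), g b x) + (∫ x in (b - a)..b, g b x)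
      = ∫ x in (0:ℝ)..b, g b x :=
    intervalIntegral.integral_add_adjacent_intervals (hgi b 0 (b - a)) (hgi b (b - a) b)
  show (∫ x in (0:ℝ)..a, g a x) < ∫ x in (0:ℝ)..b, g b x
  rw [← key1, ← key2]
  linarith


end
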